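/- Under Assumptions (A1) and (A2), for every v ∈ ℝ^N one has 0 ≤ ⟨T̃v, v⟩ ≤ (2t − 1)·⟨v, v⟩; if moreover γ₁ < min{λ̲₁, λ̲₂}, then ⟨T̃v, v⟩ > 0 for every v ≠ 0, so the spectrum of the symmetric matrix T̃ is contained in the interval (0, 2t − 1]. -/

import Mathlib

open Matrix

section PosSemidefSqrt

open scoped ComplexOrder

/-- The positive semidefinite square root of a positive semidefinite matrix
(removed from Mathlib; restored with its former definition). -/
noncomputable def Matrix.PosSemidef.sqrt {n : Type*} [Fintype n] [DecidableEq n] {𝕜 : Type*}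
    [RCLike 𝕜] {A : Matrix n n 𝕜} (hA : A.PosSemidef) : Matrix n n 𝕜 :=
  hA.1.eigenvectorUnitary.1 * diagonal ((↑) ∘ (√·) ∘ hA.1.eigenvalues) *
  (star hA.1.eigenvectorUnitary : Matrix n n 𝕜)

end PosSemidefSqrt

/-!
Write `P = γ₁ + S₁`, `Q = γ₂ - S₁`, `R = γ₂ + S₂`, `C = S₂ - γ₁` and `Y = Q^{1/2} P^{-1/2}`, so that
`T̃ = Yᵀ (C R⁻¹) Y`; we argue in the Loewner order. From `C R⁻¹ = R⁻¹ (R C) R⁻¹` and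
`R C = C² + (γ₁ + γ₂) C` we get `0 ⪯ C R⁻¹`, and `C R⁻¹ ⪯ γ₂⁻¹ S₂` because `γ₂⁻¹ R S₂ R - R C` is a
polynomial in `S₂` with nonnegative coefficients. By (A1), `S₂ ⪯ t S₁`, and `Yᵀ S₁ Y ⪯ γ₂` because
`Q^{1/2} S₁ Q^{1/2} = γ₂ S₁ - S₁²` and `S₁ ⪯ P`. Hence `0 ⪯ T̃ ⪯ t ⪯ 2t - 1`. When `γ₁ < λ̲₂`, `C`
is positive definite and `Y` is invertible, so `T̃` is positive definite.
-/

open scoped MatrixOrder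

namespace Matrix

variable {n : Type*}

lemma posDef_smul_one_add [DecidableEq n] {S : Matrix n n ℝ} {b : ℝ} (hb : 0 < b) (hS : 0 ≤ S) :
    (b • 1 + S).PosDef :=
  (PosDef.one.smul hb).add_posSemidef hS.posSemidef

lemma posDef_sub_smul_one [DecidableEq n] {S : Matrix n n ℝ} {a b : ℝ} (hS : b • 1 ≤ S)
    (hab : a < b) : (S - a • 1).PosDef := by
  rw [show S - a • 1 = (b - a) • 1 + (S - b • 1) by module]
  exact posDef_smul_one_add (sub_pos.2 hab) (sub_nonneg.2 hS)

variable [Fintype n]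

lemma le_iff_mulVec_dotProduct_le {A B : Matrix n n ℝ} (hA : A.IsHermitian)
    (hB : B.IsHermitian) : A ≤ B ↔ ∀ v, (A *ᵥ v) ⬝ᵥ v ≤ (B *ᵥ v) ⬝ᵥ v := by
  simp only [le_iff, posSemidef_iff_dotProduct_mulVec, hB.sub hA, true_and, star_trivial,
    sub_mulVec, dotProduct_sub, sub_nonneg, dotProduct_comm _ (_ *ᵥ _)]

variable [DecidableEq n]

lemma PosSemidef.sqrt_eq_cfcSqrt {A : Matrix n n ℝ} (hA : A.PosSemidef) :
    hA.sqrt = CFC.sqrt A := by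
  rw [CFC.sqrt_eq_cfc, cfc_nnreal_eq_real _ A, hA.1.cfc_eq]
  simp [IsHermitian.cfc, PosSemidef.sqrt, Function.comp_def, hA.eigenvalues_nonneg]

lemma PosSemidef.isHermitian_sqrt {A : Matrix n n ℝ} (hA : A.PosSemidef) :
    hA.sqrt.IsHermitian := by
  rw [hA.sqrt_eq_cfcSqrt]
  exact (CFC.sqrt_nonneg A).posSemidef.isHermitian

lemma PosSemidef.sqrt_mul_sqrt {A : Matrix n n ℝ} (hA : A.PosSemidef) :
    hA.sqrt * hA.sqrt = A := by
  rw [hA.sqrt_eq_cfcSqrt]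
  exact CFC.sqrt_mul_sqrt_self A hA.nonneg

lemma PosSemidef.isUnit_sqrt {A : Matrix n n ℝ} (hA : A.PosSemidef) (hAu : IsUnit A) :
    IsUnit hA.sqrt := by
  rwa [hA.sqrt_eq_cfcSqrt, CFC.isUnit_sqrt_iff A hA.nonneg]

lemma smul_one_le_of_mem_lowerBounds {A : Matrix n n ℝ} (hA : A.IsHermitian) {c : ℝ}
    (hc : c ∈ lowerBounds (Set.range hA.eigenvalues)) : c • 1 ≤ A := by
  rw [← Algebra.algebraMap_eq_smul_one, algebraMap_le_iff_le_spectrum hA.isSelfAdjoint,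
    hA.spectrum_real_eq_range_eigenvalues]
  exact hc

lemma le_smul_one_of_mem_upperBounds {A : Matrix n n ℝ} (hA : A.IsHermitian) {c : ℝ}
    (hc : c ∈ upperBounds (Set.range hA.eigenvalues)) : A ≤ c • 1 := by
  rw [← Algebra.algebraMap_eq_smul_one, le_algebraMap_iff_spectrum_le hA.isSelfAdjoint,
    hA.spectrum_real_eq_range_eigenvalues]
  exact hc

lemma spectrum_subset_Ioc {T : Matrix n n ℝ} (hT : T.PosDef) {c : ℝ} (hTc : T ≤ c • 1) :
    spectrum ℝ T ⊆ Set.Ioc 0 c := by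
  rw [← Algebra.algebraMap_eq_smul_one, le_algebraMap_iff_spectrum_le hT.isHermitian] at hTc
  exact fun x hx => ⟨hT.isStrictlyPositive.spectrum_pos hx, hTc x hx⟩

lemma mul_inv_eq_inv_mul_mul_inv {R : Matrix n n ℝ} (hRu : IsUnit R) (C : Matrix n n ℝ) :
    C * R⁻¹ = R⁻¹ * (R * C) * R⁻¹ := by
  rw [← mul_assoc, nonsing_inv_mul _ ((isUnit_iff_isUnit_det R).1 hRu), one_mul]

lemma mul_inv_le_mul_inv {R C D : Matrix n n ℝ} (hR : R.IsHermitian) (hRu : IsUnit R)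
    (h : R * C ≤ R * D) : C * R⁻¹ ≤ D * R⁻¹ := by
  rw [mul_inv_eq_inv_mul_mul_inv hRu C, mul_inv_eq_inv_mul_mul_inv hRu D]
  exact hR.inv.isSelfAdjoint.conjugate_le_conjugate h

lemma PosDef.mul_inv_of_mul {R C : Matrix n n ℝ} (hR : R.IsHermitian) (hRu : IsUnit R)
    (h : (R * C).PosDef) : (C * R⁻¹).PosDef := by
  have := h.conjTranspose_mul_mul_same
    (mulVec_injective_iff_isUnit.2 (isUnit_nonsing_inv_iff.2 hRu))
  rwa [hR.inv.eq, ← mul_inv_eq_inv_mul_mul_inv hRu C] at this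

section

variable {S : Matrix n n ℝ} {a b : ℝ}

lemma isUnit_smul_one_sub (hS : S ≤ a • 1) (hab : a < b) : IsUnit (b • 1 - S) := by
  rw [show b • 1 - S = (b - a) • 1 + (a • 1 - S) by module]
  exact (posDef_smul_one_add (sub_pos.2 hab) (sub_nonneg.2 hS)).isUnit

lemma smul_one_add_mul_sub_smul_one :
    (b • 1 + S) * (S - a • 1) = (S - a • 1) * (S - a • 1) + (a + b) • (S - a • 1) := by
  simp only [mul_sub, sub_mul, add_mul, smul_mul_assoc, mul_smul_comm, mul_one, one_mul,
    smul_sub, add_smul, smul_smul]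
  module

lemma sub_smul_one_mul_inv_nonneg (ha : 0 ≤ a) (hb : 0 < b) (haS : a • 1 ≤ S) :
    0 ≤ (S - a • 1) * (b • 1 + S)⁻¹ := by
  have hS : 0 ≤ S := (smul_nonneg ha zero_le_one).trans haS
  have hC : 0 ≤ S - a • 1 := sub_nonneg.2 haS
  have hR := posDef_smul_one_add hb hS
  rw [← zero_mul (b • 1 + S)⁻¹]
  refine mul_inv_le_mul_inv hR.isHermitian hR.isUnit ?_
  rw [mul_zero, smul_one_add_mul_sub_smul_one]
  exact add_nonneg (IsSelfAdjoint.of_nonneg hC).mul_self_nonneg (smul_nonneg (by linarith) hC)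

lemma sub_smul_one_mul_inv_le (ha : 0 ≤ a) (hb : 0 < b) (hS : 0 ≤ S) :
    (S - a • 1) * (b • 1 + S)⁻¹ ≤ b⁻¹ • S := by
  have hR := posDef_smul_one_add hb hS
  have hSR : b⁻¹ • S = (b⁻¹ • S * (b • 1 + S)) * (b • 1 + S)⁻¹ := by
    rw [mul_assoc, mul_nonsing_inv _ ((isUnit_iff_isUnit_det _).1 hR.isUnit), mul_one]
  rw [hSR]
  refine mul_inv_le_mul_inv hR.isHermitian hR.isUnit (sub_nonneg.1 ?_)
  have hgap : (b • 1 + S) * (b⁻¹ • S * (b • 1 + S)) - (b • 1 + S) * (S - a • 1)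
      = b⁻¹ • (S * S * S) + S * S + a • S + (a * b) • 1 := by
    simp only [mul_sub, add_mul, mul_add, smul_mul_assoc, mul_smul_comm, mul_one, one_mul,
      smul_add, smul_smul, mul_assoc]
    match_scalars <;> field_simp <;> ring
  rw [hgap]
  have hSS : 0 ≤ S * S := (IsSelfAdjoint.of_nonneg hS).mul_self_nonneg
  have hSSS : 0 ≤ S * S * S := conjugate_nonneg_of_nonneg hS hS
  have h1 : (0 : Matrix n n ℝ) ≤ 1 := zero_le_one
  positivity

lemma posDef_sub_smul_one_mul_inv (ha : 0 ≤ a) (hb : 0 < b) (haS : (S - a • 1).PosDef) :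
    ((S - a • 1) * (b • 1 + S)⁻¹).PosDef := by
  have hS : 0 ≤ S := (smul_nonneg ha zero_le_one).trans (sub_nonneg.1 haS.posSemidef.nonneg)
  have hR := posDef_smul_one_add hb hS
  refine PosDef.mul_inv_of_mul hR.isHermitian hR.isUnit ?_
  rw [smul_one_add_mul_sub_smul_one]
  exact PosDef.posSemidef_add haS.isHermitian.isSelfAdjoint.mul_self_nonneg.posSemidef
    (haS.smul (by linarith))

end

lemma PosSemidef.sqrt_mul_mul_sqrt_le {S : Matrix n n ℝ} (hS : S.IsHermitian) {c : ℝ}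
    (hQ : (c • 1 - S).PosSemidef) : hQ.sqrt * S * hQ.sqrt ≤ c • S := by
  have hqq := hQ.sqrt_mul_sqrt
  generalize hQ.sqrt = q at hqq ⊢
  obtain rfl : S = c • 1 - q * q := by rw [hqq, sub_sub_cancel]
  have hgap : c • (c • 1 - q * q) - q * (c • 1 - q * q) * q =
      (c • 1 - q * q) * (c • 1 - q * q) := by
    simp only [mul_sub, sub_mul, smul_sub, smul_mul_assoc, mul_smul_comm, mul_one, one_mul,
      smul_smul, mul_assoc]
  exact sub_nonneg.1 (hgap ▸ hS.isSelfAdjoint.mul_self_nonneg)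

lemma PosSemidef.inv_sqrt_mul_mul_inv_sqrt_le_one {P S : Matrix n n ℝ} (hP : P.PosSemidef)
    (hPu : IsUnit P) (hSP : S ≤ P) : hP.sqrt⁻¹ * S * hP.sqrt⁻¹ ≤ 1 := by
  have hp := (isUnit_iff_isUnit_det _).1 (hP.isUnit_sqrt hPu)
  have hPP : hP.sqrt⁻¹ * P * hP.sqrt⁻¹ = 1 := by
    calc hP.sqrt⁻¹ * P * hP.sqrt⁻¹ = (hP.sqrt⁻¹ * hP.sqrt) * (hP.sqrt * hP.sqrt⁻¹) := by
          rw [mul_assoc, mul_assoc, ← mul_assoc hP.sqrt, hP.sqrt_mul_sqrt]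
      _ = 1 := by rw [nonsing_inv_mul _ hp, mul_nonsing_inv _ hp, one_mul]
  exact hPP ▸ hP.isHermitian_sqrt.inv.isSelfAdjoint.conjugate_le_conjugate hSP

section TildeT

variable {S₁ S₂ : Matrix n n ℝ} {γ₁ γ₂ : ℝ}

noncomputable def tildeT (hP : (γ₁ • 1 + S₁).PosSemidef) (hQ : (γ₂ • 1 - S₁).PosSemidef)
    (S₂ : Matrix n n ℝ) : Matrix n n ℝ :=
  hP.sqrt⁻¹ * hQ.sqrt * (S₂ - γ₁ • 1) * (γ₂ • 1 + S₂)⁻¹ * hQ.sqrt * hP.sqrt⁻¹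

variable (hP : (γ₁ • 1 + S₁).PosSemidef) (hQ : (γ₂ • 1 - S₁).PosSemidef)

lemma star_sqrt_mul_inv_sqrt : star (hQ.sqrt * hP.sqrt⁻¹) = hP.sqrt⁻¹ * hQ.sqrt := by
  rw [star_mul, star_eq_conjTranspose, star_eq_conjTranspose, hQ.isHermitian_sqrt.eq,
    hP.isHermitian_sqrt.inv.eq]

lemma tildeT_eq_star_mul_mul : tildeT hP hQ S₂ =
    star (hQ.sqrt * hP.sqrt⁻¹) * ((S₂ - γ₁ • 1) * (γ₂ • 1 + S₂)⁻¹) * (hQ.sqrt * hP.sqrt⁻¹) := by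
  simp only [tildeT, star_sqrt_mul_inv_sqrt, mul_assoc]

lemma tildeT_nonneg (hγ₁ : 0 ≤ γ₁) (hγ₂ : 0 < γ₂) (hS₂ : γ₁ • 1 ≤ S₂) :
    0 ≤ tildeT hP hQ S₂ := by
  rw [tildeT_eq_star_mul_mul]
  exact star_left_conjugate_nonneg (sub_smul_one_mul_inv_nonneg hγ₁ hγ₂ hS₂) _

lemma star_sqrt_mul_inv_sqrt_mul_mul_le_smul_one (hS₁ : 0 ≤ S₁) (hγ₁ : 0 ≤ γ₁) (hγ₂ : 0 ≤ γ₂)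
    (hPu : IsUnit (γ₁ • 1 + S₁)) :
    star (hQ.sqrt * hP.sqrt⁻¹) * S₁ * (hQ.sqrt * hP.sqrt⁻¹) ≤ γ₂ • 1 :=
  calc star (hQ.sqrt * hP.sqrt⁻¹) * S₁ * (hQ.sqrt * hP.sqrt⁻¹)
      = hP.sqrt⁻¹ * (hQ.sqrt * S₁ * hQ.sqrt) * hP.sqrt⁻¹ := by
        simp only [star_sqrt_mul_inv_sqrt, mul_assoc]
    _ ≤ hP.sqrt⁻¹ * (γ₂ • S₁) * hP.sqrt⁻¹ :=
        hP.isHermitian_sqrt.inv.isSelfAdjoint.conjugate_le_conjugate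
          (hQ.sqrt_mul_mul_sqrt_le (IsSelfAdjoint.of_nonneg hS₁))
    _ = γ₂ • (hP.sqrt⁻¹ * S₁ * hP.sqrt⁻¹) := by rw [mul_smul_comm, smul_mul_assoc]
    _ ≤ γ₂ • 1 := smul_le_smul_of_nonneg_left (hP.inv_sqrt_mul_mul_inv_sqrt_le_one hPu
        (le_add_of_nonneg_left (smul_nonneg hγ₁ zero_le_one))) hγ₂

lemma tildeT_le (hS₁ : 0 ≤ S₁) (hS₂ : 0 ≤ S₂) (hγ₁ : 0 ≤ γ₁) (hγ₂ : 0 < γ₂)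
    (hPu : IsUnit (γ₁ • 1 + S₁)) {t : ℝ} (ht : 0 ≤ t) (hS₂S₁ : S₂ ≤ t • S₁) :
    tildeT hP hQ S₂ ≤ t • 1 := by
  set Y := hQ.sqrt * hP.sqrt⁻¹
  have hM : (S₂ - γ₁ • 1) * (γ₂ • 1 + S₂)⁻¹ ≤ (γ₂⁻¹ * t) • S₁ := by
    rw [mul_smul]
    exact (sub_smul_one_mul_inv_le hγ₁ hγ₂ hS₂).trans
      (smul_le_smul_of_nonneg_left hS₂S₁ (inv_nonneg.2 hγ₂.le))
  rw [tildeT_eq_star_mul_mul]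
  calc star Y * ((S₂ - γ₁ • 1) * (γ₂ • 1 + S₂)⁻¹) * Y ≤ star Y * ((γ₂⁻¹ * t) • S₁) * Y :=
        star_left_conjugate_le_conjugate hM Y
    _ = (γ₂⁻¹ * t) • (star Y * S₁ * Y) := by rw [mul_smul_comm, smul_mul_assoc]
    _ ≤ (γ₂⁻¹ * t) • (γ₂ • 1) := smul_le_smul_of_nonneg_left
        (star_sqrt_mul_inv_sqrt_mul_mul_le_smul_one hP hQ hS₁ hγ₁ hγ₂.le hPu) (by positivity)
    _ = t • 1 := by rw [smul_smul, mul_right_comm, inv_mul_cancel₀ hγ₂.ne', one_mul]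

lemma tildeT_posDef (hγ₁ : 0 ≤ γ₁) (hγ₂ : 0 < γ₂) (hPu : IsUnit (γ₁ • 1 + S₁))
    (hQu : IsUnit (γ₂ • 1 - S₁)) (hS₂ : (S₂ - γ₁ • 1).PosDef) : (tildeT hP hQ S₂).PosDef := by
  rw [tildeT_eq_star_mul_mul, star_eq_conjTranspose]
  exact (posDef_sub_smul_one_mul_inv hγ₁ hγ₂ hS₂).conjTranspose_mul_mul_same
    (mulVec_injective_iff_isUnit.2
      ((hQ.isUnit_sqrt hQu).mul (isUnit_nonsing_inv_iff.2 (hP.isUnit_sqrt hPu))))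

end TildeT

end Matrix

open Matrix MatrixOrder

theorem tildeT_spectrum_bound_general (N : ℕ)
    (S1 S2 : Matrix (Fin N) (Fin N) ℝ) (hS1 : S1.PosDef) (hS2 : S2.PosDef)
    (lmin1 lmax1 lmin2 lmax2 : ℝ)
    (hlmax1 : IsGreatest (Set.range hS1.isHermitian.eigenvalues) lmax1)
    (hlmin2 : IsLeast (Set.range hS2.isHermitian.eigenvalues) lmin2)
    (s t : ℝ) (ht : 1 ≤ t)
    (hA1 : ∀ v : Fin N → ℝ,
      s * ((S1 *ᵥ v) ⬝ᵥ v) ≤ (S2 *ᵥ v) ⬝ᵥ v ∧ (S2 *ᵥ v) ⬝ᵥ v ≤ t * ((S1 *ᵥ v) ⬝ᵥ v))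
    (γ1 γ2 : ℝ) (hγ1 : 0 < γ1) (hγ1' : γ1 ≤ min lmin1 lmin2)
    (hγ2 : 3 * max lmax1 lmax2 ≤ γ2)
    (hP1 : (γ1 • (1 : Matrix (Fin N) (Fin N) ℝ) + S1).PosSemidef)
    (hQ1 : (γ2 • (1 : Matrix (Fin N) (Fin N) ℝ) - S1).PosSemidef)
    (Tt : Matrix (Fin N) (Fin N) ℝ)
    (hTt : Tt = hP1.sqrt⁻¹ * hQ1.sqrt * (S2 - γ1 • (1 : Matrix (Fin N) (Fin N) ℝ)) *
      (γ2 • (1 : Matrix (Fin N) (Fin N) ℝ) + S2)⁻¹ * hQ1.sqrt * hP1.sqrt⁻¹) :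
    (∀ v : Fin N → ℝ,
      0 ≤ (Tt *ᵥ v) ⬝ᵥ v ∧ (Tt *ᵥ v) ⬝ᵥ v ≤ (2 * t - 1) * (v ⬝ᵥ v)) ∧
      (γ1 < min lmin1 lmin2 →
        (∀ v : Fin N → ℝ, v ≠ 0 → 0 < (Tt *ᵥ v) ⬝ᵥ v) ∧
          spectrum ℝ Tt ⊆ Set.Ioc 0 (2 * t - 1)) := by
  obtain rfl : Tt = tildeT hP1 hQ1 S2 := hTt
  have hlmax1_pos : 0 < lmax1 := by
    obtain ⟨i, rfl⟩ := hlmax1.1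
    exact hS1.eigenvalues_pos i
  have hγ2_gt : lmax1 < γ2 := by linarith [le_max_left lmax1 lmax2]
  have hγ2_pos : 0 < γ2 := hlmax1_pos.trans hγ2_gt
  have hS1_le : S1 ≤ lmax1 • 1 := le_smul_one_of_mem_upperBounds _ hlmax1.2
  have hS2_ge : lmin2 • 1 ≤ S2 := smul_one_le_of_mem_lowerBounds _ hlmin2.2
  have hS2_le : S2 ≤ t • S1 := by
    refine (le_iff_mulVec_dotProduct_le hS2.isHermitian
      (hS1.isHermitian.smul (IsSelfAdjoint.all t))).2 fun v => ?_
    simpa only [smul_mulVec, smul_dotProduct, smul_eq_mul] using (hA1 v).2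
  have hP_unit := (posDef_smul_one_add hγ1 hS1.posSemidef.nonneg).isUnit
  have hT_nonneg : 0 ≤ tildeT hP1 hQ1 S2 := tildeT_nonneg hP1 hQ1 hγ1.le hγ2_pos
    ((smul_le_smul_of_nonneg_right (hγ1'.trans (min_le_right _ _)) zero_le_one).trans hS2_ge)
  have hT_le : tildeT hP1 hQ1 S2 ≤ (2 * t - 1) • 1 := (tildeT_le hP1 hQ1 hS1.posSemidef.nonneg
    hS2.posSemidef.nonneg hγ1.le hγ2_pos hP_unit (by linarith) hS2_le).trans
      (smul_le_smul_of_nonneg_right (by linarith) zero_le_one)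
  have hT_herm : (tildeT hP1 hQ1 S2).IsHermitian := IsSelfAdjoint.of_nonneg hT_nonneg
  refine ⟨fun v => ⟨?_, ?_⟩, fun hlt => ?_⟩
  · simpa using (le_iff_mulVec_dotProduct_le isHermitian_zero hT_herm).1 hT_nonneg v
  · simpa [smul_mulVec] using (le_iff_mulVec_dotProduct_le hT_herm
      (isHermitian_one.smul (IsSelfAdjoint.all _))).1 hT_le v
  have hT_pos := tildeT_posDef hP1 hQ1 hγ1.le hγ2_pos hP_unit
    (isUnit_smul_one_sub hS1_le hγ2_gt) (posDef_sub_smul_one hS2_ge (lt_min_iff.1 hlt).2)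
  refine ⟨fun v hv => ?_, spectrum_subset_Ioc hT_pos hT_le⟩
  simpa [dotProduct_comm] using hT_pos.dotProduct_mulVec_pos hv

/-- under Assumptions (A1) and (A2), `0 ≤ ⟨T̃v, v⟩ ≤ (2t - 1)⟨v, v⟩`
for every `v`; if moreover `γ₁ < min{λ̲₁, λ̲₂}`, then `⟨T̃v, v⟩ > 0` for every
`v ≠ 0`, so the spectrum of the symmetric matrix `T̃` is contained in `(0, 2t - 1]`. -/
theorem tildeT_spectrum_bound (N : ℕ) (hN : 1 ≤ N)
    (S1 S2 : Matrix (Fin N) (Fin N) ℝ) (hS1 : S1.PosDef) (hS2 : S2.PosDef)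
    (lmin1 lmax1 lmin2 lmax2 : ℝ)
    (hlmin1 : IsLeast (Set.range hS1.isHermitian.eigenvalues) lmin1)
    (hlmax1 : IsGreatest (Set.range hS1.isHermitian.eigenvalues) lmax1)
    (hlmin2 : IsLeast (Set.range hS2.isHermitian.eigenvalues) lmin2)
    (hlmax2 : IsGreatest (Set.range hS2.isHermitian.eigenvalues) lmax2)
    (s t : ℝ) (hs : 0 < s) (hs1 : s ≤ 1) (ht : 1 ≤ t)
    (hA1 : ∀ v : Fin N → ℝ,
      s * ((S1 *ᵥ v) ⬝ᵥ v) ≤ (S2 *ᵥ v) ⬝ᵥ v ∧ (S2 *ᵥ v) ⬝ᵥ v ≤ t * ((S1 *ᵥ v) ⬝ᵥ v))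
    (γ1 γ2 : ℝ) (hγ1 : 0 < γ1) (hγ1' : γ1 ≤ min lmin1 lmin2)
    (hγ2 : 3 * max lmax1 lmax2 ≤ γ2)
    (hP1 : (γ1 • (1 : Matrix (Fin N) (Fin N) ℝ) + S1).PosSemidef)
    (hQ1 : (γ2 • (1 : Matrix (Fin N) (Fin N) ℝ) - S1).PosSemidef)
    (Tt : Matrix (Fin N) (Fin N) ℝ)
    (hTt : Tt = hP1.sqrt⁻¹ * hQ1.sqrt * (S2 - γ1 • (1 : Matrix (Fin N) (Fin N) ℝ)) *
      (γ2 • (1 : Matrix (Fin N) (Fin N) ℝ) + S2)⁻¹ * hQ1.sqrt * hP1.sqrt⁻¹) :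
    (∀ v : Fin N → ℝ,
      0 ≤ (Tt *ᵥ v) ⬝ᵥ v ∧ (Tt *ᵥ v) ⬝ᵥ v ≤ (2 * t - 1) * (v ⬝ᵥ v)) ∧
      (γ1 < min lmin1 lmin2 →
        (∀ v : Fin N → ℝ, v ≠ 0 → 0 < (Tt *ᵥ v) ⬝ᵥ v) ∧
          spectrum ℝ Tt ⊆ Set.Ioc 0 (2 * t - 1)) :=
  tildeT_spectrum_bound_general N S1 S2 hS1 hS2 lmin1 lmax1 lmin2 lmax2 hlmax1 hlmin2 s t ht hA1 γ1
    γ2 hγ1 hγ1' hγ2 hP1 hQ1 Tt hTt
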